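/- arXiv:1606.06613 — 8 statements merged into one kernel-verified Lean document; each statement's English description precedes it below -/
import Mathlib

section
/- For any finitely supported multi-index ν, ∑_{m ≤ ν} C(ν, m) · |m|! · |ν − m|! = (|ν| + 1)!. -/
/-!
Grouping the multi-indices `m ≤ ν` by `k = |m|`, the coefficient `∑_{|m| = k} C(ν, m)` is
`C(|ν|, k)`: compare the coefficients of `X^k` in `∏_j (1 + X)^{ν_j} = (1 + X)^{|ν|}`.
Each of the `|ν| + 1` groups then contributes `C(|ν|, k) k! (|ν| - k)! = |ν|!`.
-/

open Finset Polynomial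
open scoped Nat

theorem Finset.sum_finsupp_prod_eq_prod_sum {ι α R : Type*} [Zero α] [CommSemiring R]
    (s : Finset ι) (t : ι → Finset α) (f : ι → α → R) :
    ∑ g ∈ s.finsupp t, ∏ i ∈ s, f i (g i) = ∏ i ∈ s, ∑ a ∈ t i, f i a := by
  classical
  rw [prod_sum, Finset.finsupp, sum_map]
  refine Finset.sum_congr (by congr) fun g _ => ?_
  rw [← prod_attach s]
  exact Finset.prod_congr rfl fun i _ => by simp [Finsupp.indicator_of_mem i.2]

namespace Finsupp

theorem degree_tsub_of_le {ι : Type*} {m ν : ι →₀ ℕ} (h : m ≤ ν) :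
    (ν - m).degree = ν.degree - m.degree := by
  rw [eq_tsub_iff_add_eq_of_le (degree_mono h), ← map_add, tsub_add_cancel_of_le h]

variable {ι : Type*} [DecidableEq ι]

theorem Iic_eq_finsupp {α : Type*} [AddCommMonoid α] [PartialOrder α] [CanonicallyOrderedAdd α]
    [OrderBot α] [LocallyFiniteOrder α] [DecidableEq α] (ν : ι →₀ α) :
    Iic ν = ν.support.finsupp fun i => Iic (ν i) := by
  ext m
  simp only [mem_Iic, mem_finsupp_iff, Finsupp.le_def]
  refine ⟨fun h => ⟨fun i hi => ?_, fun i _ => h i⟩, fun h i => ?_⟩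
  · exact mem_support_iff.2 fun hν => mem_support_iff.1 hi (nonpos_iff_eq_zero.1 (hν ▸ h i))
  · by_cases hi : i ∈ ν.support
    · exact h.2 i hi
    · rw [notMem_support_iff.1 fun hm => hi (h.1 hm)]
      exact zero_le

theorem sum_Iic_prod_choose_mul_X_pow (ν : ι →₀ ℕ) :
    ∑ m ∈ Iic ν, C (∏ j ∈ ν.support, (ν j).choose (m j)) * (X : ℕ[X]) ^ m.degree
      = (1 + X) ^ ν.degree := by
  have hdegree : ∀ m ∈ Iic ν, m.degree = ∑ j ∈ ν.support, m j := fun m hm =>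
    sum_of_support_subset m (support_mono (mem_Iic.1 hm)) (fun _ n => n) fun _ _ => rfl
  rw [Finset.sum_congr rfl fun m hm => by
      rw [hdegree m hm, ← prod_pow_eq_pow_sum, map_prod, ← prod_mul_distrib],
    Iic_eq_finsupp,
    Finset.sum_finsupp_prod_eq_prod_sum _ _ fun j a => C ((ν j).choose a) * X ^ a,
    degree_apply, ← prod_pow_eq_pow_sum]
  refine Finset.prod_congr rfl fun j _ => ?_
  rw [add_comm, add_pow, ← Nat.range_succ_eq_Iic]
  exact Finset.sum_congr rfl fun a _ => by
    rw [one_pow, mul_one, mul_comm, ← map_natCast C, Nat.cast_id]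

theorem sum_prod_choose_of_degree_eq (ν : ι →₀ ℕ) (k : ℕ) :
    ∑ m ∈ Iic ν with m.degree = k, ∏ j ∈ ν.support, (ν j).choose (m j)
      = ν.degree.choose k := by
  have hcoeff := congrArg (coeff · k) (sum_Iic_prod_choose_mul_X_pow ν)
  simp only [finsetSum_coeff, coeff_C_mul_X_pow, coeff_one_add_X_pow, Nat.cast_id] at hcoeff
  rw [sum_filter, ← hcoeff]
  exact Finset.sum_congr rfl fun m _ => by simp only [eq_comm]

theorem sum_prod_choose_mul_factorial_mul_factorial (ν : ι →₀ ℕ) :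
    ∑ m ∈ Iic ν, (∏ j ∈ ν.support, (ν j).choose (m j)) * m.degree ! * (ν - m).degree !
      = (ν.degree + 1)! := by
  set n := ν.degree
  have hmaps : ∀ m ∈ Iic ν, m.degree ∈ range (n + 1) := fun m hm =>
    mem_range_succ_iff.2 (degree_mono (mem_Iic.1 hm))
  have hfiber : ∀ k ∈ range (n + 1), ∑ m ∈ Iic ν with m.degree = k,
      (∏ j ∈ ν.support, (ν j).choose (m j)) * m.degree ! * (ν - m).degree ! = n ! := by
    intro k hk
    rw [Finset.sum_congr rfl fun m hm => by
        rw [degree_tsub_of_le (mem_Iic.1 (mem_filter.1 hm).1), (mem_filter.1 hm).2],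
      ← Finset.sum_mul, ← Finset.sum_mul, sum_prod_choose_of_degree_eq]
    exact Nat.choose_mul_factorial_mul_factorial (mem_range_succ_iff.1 hk)
  rw [← sum_fiberwise_of_maps_to hmaps, Finset.sum_congr rfl hfiber, sum_const, card_range,
    smul_eq_mul, Nat.factorial_succ]

end Finsupp

-- `Finsupp.degree m` unfolds to `m.sum fun _ n => n`.
/-- For any finitely supported multi-index `ν`,
`∑_{m ≤ ν} C(ν, m) · |m|! · |ν − m|! = (|ν| + 1)!`. -/
theorem sum_multiindex_factorial_one (ν : ℕ →₀ ℕ) :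
    ∑ m ∈ Finset.Iic ν,
      (∏ j ∈ ν.support, (ν j).choose (m j)) *
        Nat.factorial (m.sum fun _ n => n) *
        Nat.factorial ((ν - m).sum fun _ n => n)
    = Nat.factorial ((ν.sum fun _ n => n) + 1) :=
  Finsupp.sum_prod_choose_mul_factorial_mul_factorial ν
end

section
/- For any finitely supported multi-index ν, ∑_{m ≤ ν} C(ν, m) · |m|! · (|ν − m| + 1)! = (|ν| + 2)! / 2. -/
/-!
Grouping the multi-indices `m ≤ ν` by `k = |m|`, the weights `∏ⱼ C(νⱼ, mⱼ)` of one group add up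
to `C(|ν|, k)`: both are the coefficient of `X ^ k` in `∏ⱼ (X + 1) ^ νⱼ = (X + 1) ^ |ν|`.
This leaves the one-variable sum `∑ₖ C(n, k) k! (n - k + 1)!`, whose terms are `n! (n - k + 1)`
because `C(n, k) k! (n - k)! = n!`; the Gauss sum then gives `n! (n + 1) (n + 2) / 2`.
-/

open Finset
open scoped Nat

theorem Finset.prod_sum_finsupp {ι α R : Type*} [Zero α] [CommSemiring R] (s : Finset ι)
    (t : ι → Finset α) (f : ι → α → R) :
    ∏ i ∈ s, ∑ a ∈ t i, f i a = ∑ g ∈ s.finsupp t, ∏ i ∈ s, f i (g i) := by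
  classical
  rw [Finset.finsupp, sum_map, prod_sum]
  refine sum_congr rfl fun p _ => ?_
  rw [← prod_attach s]
  refine prod_congr rfl fun i _ => ?_
  simp [Finsupp.indicator_of_mem i.2]

namespace Finsupp

variable {ι : Type*}

theorem degree_sub_of_le {μ ν : ι →₀ ℕ} (h : μ ≤ ν) : degree (ν - μ) = degree ν - degree μ := by
  rw [eq_tsub_iff_add_eq_of_le (degree_mono h), ← map_add, tsub_add_cancel_of_le h]

variable [DecidableEq ι]

theorem prod_sum_Iic {R : Type*} [CommSemiring R] (ν : ι →₀ ℕ) (f : ι → ℕ → R) :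
    ∏ j ∈ ν.support, ∑ i ∈ Iic (ν j), f j i = ∑ m ∈ Iic ν, ∏ j ∈ ν.support, f j (m j) := by
  rw [Iic_eq_Icc, bot_eq_zero, Icc_eq, support_zero, empty_union, ← prod_sum_finsupp]
  rfl

open Polynomial in
theorem sum_Iic_C_prod_choose_mul_X_pow (ν : ι →₀ ℕ) :
    ∑ m ∈ Iic ν, C (∏ j ∈ ν.support, (ν j).choose (m j)) * X ^ degree m = (X + 1) ^ degree ν := by
  calc ∑ m ∈ Iic ν, C (∏ j ∈ ν.support, (ν j).choose (m j)) * X ^ degree m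
      = ∑ m ∈ Iic ν, ∏ j ∈ ν.support, X ^ m j * C ((ν j).choose (m j)) := by
        refine Finset.sum_congr rfl fun m hm => ?_
        have hdeg : degree m = ∑ j ∈ ν.support, m j := Finset.sum_subset
          (support_mono (mem_Iic.1 hm)) fun j _ hj => notMem_support_iff.1 hj
        rw [prod_mul_distrib, map_prod, prod_pow_eq_pow_sum, hdeg, mul_comm]
    _ = ∏ j ∈ ν.support, (X + 1) ^ ν j := by
        rw [← prod_sum_Iic ν fun j i => X ^ i * C ((ν j).choose i)]
        refine Finset.prod_congr rfl fun j _ => ?_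
        simp [add_pow, Nat.range_succ_eq_Iic]
    _ = (X + 1) ^ degree ν := prod_pow_eq_pow_sum _ _ _

open Polynomial in
theorem sum_filter_degree_eq_prod_choose (ν : ι →₀ ℕ) (k : ℕ) :
    ∑ m ∈ Iic ν with degree m = k, ∏ j ∈ ν.support, (ν j).choose (m j) = (degree ν).choose k := by
  have := congrArg (coeff · k) (sum_Iic_C_prod_choose_mul_X_pow ν)
  simp only [finsetSum_coeff, coeff_C_mul_X_pow, coeff_X_add_one_pow] at this
  rw [sum_filter]
  simpa only [eq_comm, Nat.cast_id] using this

theorem sum_Iic_prod_choose_mul {R : Type*} [CommSemiring R] (ν : ι →₀ ℕ) (g : ℕ → R) :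
    ∑ m ∈ Iic ν, (∏ j ∈ ν.support, ((ν j).choose (m j) : R)) * g (degree m)
      = ∑ k ∈ range (degree ν + 1), ((degree ν).choose k : R) * g k := by
  rw [← sum_fiberwise_of_maps_to (g := degree)
    fun m hm => mem_range_succ_iff.2 (degree_mono (mem_Iic.1 hm))]
  refine Finset.sum_congr rfl fun k _ => ?_
  rw [← sum_filter_degree_eq_prod_choose, Nat.cast_sum, Finset.sum_mul]
  refine Finset.sum_congr rfl fun m hm => ?_
  rw [(mem_filter.1 hm).2, Nat.cast_prod]

end Finsupp

theorem Nat.sum_range_choose_mul_factorial_mul_factorial_succ (n : ℕ) :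
    (∑ k ∈ range (n + 1), n.choose k * k ! * (n - k + 1)!) * 2 = (n + 2)! := by
  have hterm : ∀ k ∈ range (n + 1), n.choose k * k ! * (n - k + 1)! = n ! * (n - k + 1) := by
    intro k hk
    rw [Nat.factorial_succ, ← Nat.choose_mul_factorial_mul_factorial (mem_range_succ_iff.1 hk)]
    ring
  have hgauss : (∑ k ∈ range (n + 1), (n - k + 1)) * 2 = (n + 2) * (n + 1) := by
    calc (∑ k ∈ range (n + 1), (n - k + 1)) * 2
        = (∑ k ∈ range (n + 1), (k + 1)) * 2 := by
          rw [← sum_range_reflect]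
          congr 1
          exact sum_congr rfl fun k hk => by have := mem_range.1 hk; omega
      _ = (∑ k ∈ range (n + 2), k) * 2 := by rw [sum_range_succ' _ (n + 1), add_zero]
      _ = (n + 2) * (n + 1) := sum_range_id_mul_two (n + 2)
  rw [sum_congr rfl hterm, ← mul_sum, mul_assoc, hgauss, Nat.factorial_succ, Nat.factorial_succ]
  ring

open Finsupp in
/-- For any finitely supported multi-index `ν`,
`∑_{m ≤ ν} C(ν, m) · |m|! · (|ν − m| + 1)! = (|ν| + 2)!/2`. -/
theorem sum_multiindex_factorial_two (ν : ℕ →₀ ℕ) :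
    (∑ m ∈ Finset.Iic ν,
      ((∏ j ∈ ν.support, (ν j).choose (m j)) : ℚ) *
        Nat.factorial (m.sum fun _ n => n) *
        Nat.factorial (((ν - m).sum fun _ n => n) + 1))
    = (Nat.factorial ((ν.sum fun _ n => n) + 2) : ℚ) / 2 := by
  change (∑ m ∈ Iic ν, ((∏ j ∈ ν.support, (ν j).choose (m j)) : ℚ) *
    (degree m)! * (degree (ν - m) + 1)!) = ((degree ν + 2)! : ℚ) / 2
  set n := degree ν
  have hsum : ∑ m ∈ Iic ν, (∏ j ∈ ν.support, (ν j).choose (m j)) *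
      (degree m)! * (degree (ν - m) + 1)! = ∑ k ∈ range (n + 1), n.choose k * k ! * (n - k + 1)! :=
    calc _ = ∑ m ∈ Iic ν, (∏ j ∈ ν.support, (ν j).choose (m j)) *
          ((degree m)! * (n - degree m + 1)!) :=
          Finset.sum_congr rfl fun m hm => by rw [degree_sub_of_le (mem_Iic.1 hm), mul_assoc]
      _ = _ := by
          simpa only [Nat.cast_id, mul_assoc] using
            sum_Iic_prod_choose_mul ν fun k => k ! * (n - k + 1)!
  rw [eq_div_iff two_ne_zero]
  exact_mod_cast hsum ▸ Nat.sum_range_choose_mul_factorial_mul_factorial_succ n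
end

section
/- Let b = (b_j)_{j≥1} be a sequence of non-negative reals, and let (𝔸_ν) and (𝔹_ν), indexed by finitely supported multi-indices ν, be non-negative numbers satisfying 𝔸_ν ≤ ∑_{j ∈ supp(ν)} ν_j · b_j · 𝔸_{ν − e_j} + 𝔹_ν for every finitely supported multi-index ν (including ν = 0). Then for all finitely supported ν, 𝔸_ν ≤ ∑_{m ≤ ν} C(ν, m) · |m|! · b^m · 𝔹_{ν − m}, where b^m = ∏_j b_j^{m_j}. -/
/-!
The right-hand side `F ν = ∑_{m ≤ ν} C(ν,m) |m|! b^m 𝔹_{ν-m}` solves the recursion with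
equality: `F ν = ∑_j ν_j b_j F(ν - e_j) + 𝔹_ν`. Writing `m = m' + e_j` in `F(ν - e_j)`, the
identities `ν_j C(ν - e_j, m - e_j) = m_j C(ν, m)`, `b_j b^{m - e_j} = b^m` and `∑_j m_j = |m|`
turn the sum over `j` into the terms of `F ν` with `m ≠ 0`, while `m = 0` contributes `𝔹_ν`.
Since the recursion is monotone (its coefficients are non-negative) and `ν - e_j < ν`,
well-founded induction gives `𝔸 ≤ F`.
-/

open Finset Finsupp

theorem Finset.mul_prod_eq_mul_prod_of_eq_off {ι M : Type*} [CommMonoid M] [DecidableEq ι]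
    {s : Finset ι} {f g : ι → M} {a c : M} {j : ι} (hj : j ∈ s)
    (hfg : ∀ k ∈ s, k ≠ j → f k = g k) (h : a * f j = c * g j) :
    a * ∏ k ∈ s, f k = c * ∏ k ∈ s, g k := by
  rw [← mul_prod_erase s f hj, ← mul_prod_erase s g hj,
    prod_congr rfl fun k hk => hfg k (mem_of_mem_erase hk) (ne_of_mem_erase hk),
    ← mul_assoc, h, mul_assoc]

namespace Finsupp

variable {σ : Type*}

theorem tsub_single_one_lt {ν : σ →₀ ℕ} {j : σ} (hj : j ∈ ν.support) :
    ν - single j 1 < ν := by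
  refine tsub_le_self.lt_of_ne fun h => ?_
  have := DFunLike.congr_fun h j
  simp only [coe_tsub, Pi.sub_apply, single_eq_same] at this
  have := mem_support_iff.1 hj
  omega

theorem degree_tsub_single_one_add_one {m : σ →₀ ℕ} {j : σ} (hj : 0 < m j) :
    (m - single j 1).degree + 1 = m.degree := by
  have hm : m - single j 1 + single j 1 = m := tsub_add_cancel_of_le (single_le_iff.2 hj)
  conv_rhs => rw [← hm]
  rw [map_add, degree_single]

theorem mul_prod_pow_tsub_single_one {M : Type*} [CommMonoid M] (b : σ → M) {m : σ →₀ ℕ}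
    {j : σ} (hj : 0 < m j) :
    b j * (m - single j 1).prod (fun k n => b k ^ n) = m.prod (fun k n => b k ^ n) := by
  have hm : m - single j 1 + single j 1 = m := tsub_add_cancel_of_le (single_le_iff.2 hj)
  conv_rhs => rw [← hm]
  rw [prod_add_index' (fun _ => pow_zero _) (fun _ _ _ => pow_add _ _ _),
    prod_single_index (h := fun k n => b k ^ n) (pow_zero _), pow_one, mul_comm]

theorem prod_choose_eq_of_support_subset {ν m : σ →₀ ℕ} (hm : m ≤ ν) {s : Finset σ}
    (hs : ν.support ⊆ s) :
    ∏ k ∈ ν.support, (ν k).choose (m k) = ∏ k ∈ s, (ν k).choose (m k) :=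
  prod_subset hs fun k _ (hk : k ∉ ν.support) => by
    have hνk : ν k = 0 := notMem_support_iff.1 hk
    have hmk : m k = 0 := by have := hm k; omega
    rw [hνk, hmk, Nat.choose_zero_right]

theorem mul_prod_choose_tsub_single_one {ν m : σ →₀ ℕ} (hm : m ≤ ν) {j : σ}
    (hj : 0 < m j) :
    ν j * ∏ k ∈ (ν - single j 1).support,
       ((ν - single j 1 : σ →₀ ℕ) k).choose ((m - single j 1 : σ →₀ ℕ) k)
      = m j * ∏ k ∈ ν.support, (ν k).choose (m k) := by
  classical
  have hjν : j ∈ ν.support := mem_support_iff.2 (hj.trans_le (hm j)).ne'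
  rw [prod_choose_eq_of_support_subset (tsub_le_tsub_right hm _) support_tsub]
  refine mul_prod_eq_mul_prod_of_eq_off hjν (fun k _ hk => by simp [Ne.symm hk]) ?_
  obtain ⟨n, hn⟩ := Nat.exists_eq_add_of_lt (hj.trans_le (hm j))
  obtain ⟨i, hi⟩ := Nat.exists_eq_add_of_lt hj
  simp only [coe_tsub, Pi.sub_apply, single_eq_same, hn, hi, zero_add, Nat.add_sub_cancel]
  rw [Nat.add_one_mul_choose_eq, mul_comm]

end Finsupp

section Majorant

variable {σ : Type*} (b : σ → ℝ) (B : (σ →₀ ℕ) → ℝ)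

noncomputable def majorantTerm (ν m : σ →₀ ℕ) : ℝ :=
  (∏ j ∈ ν.support, ((ν j).choose (m j) : ℝ)) * (m.degree).factorial *
    m.prod (fun j n => b j ^ n) * B (ν - m)

theorem majorantTerm_zero_right (ν : σ →₀ ℕ) : majorantTerm b B ν 0 = B ν := by
  simp [majorantTerm]

theorem majorantTerm_tsub_single_one_mul_degree {ν m : σ →₀ ℕ} (hm : m ≤ ν) {j : σ}
    (hj : 0 < m j) :
    ν j * b j * majorantTerm b B (ν - single j 1) (m - single j 1) * m.degree
      = m j * majorantTerm b B ν m := by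
  have hC := congrArg (Nat.cast (R := ℝ)) (mul_prod_choose_tsub_single_one hm hj)
  push_cast at hC
  rw [majorantTerm, majorantTerm, tsub_tsub_tsub_cancel_right (single_le_iff.2 hj),
    ← degree_tsub_single_one_add_one hj, Nat.factorial_succ,
    ← mul_prod_pow_tsub_single_one b hj]
  push_cast
  linear_combination (b j * ((m - single j 1).degree.factorial : ℝ) *
    (m - single j 1).prod (fun k n => b k ^ n) * B (ν - m) *
    ((m - single j 1).degree + 1 : ℝ)) * hC

theorem sum_support_mul_majorantTerm_tsub_single_one {ν m : σ →₀ ℕ} (hm : m ≤ ν)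
    (hm0 : m ≠ 0) :
    ∑ j ∈ m.support, ν j * b j * majorantTerm b B (ν - single j 1) (m - single j 1)
      = majorantTerm b B ν m := by
  have hdeg : (m.degree : ℝ) ≠ 0 := by exact_mod_cast (degree_eq_zero_iff m).not.2 hm0
  refine mul_right_cancel₀ hdeg ?_
  rw [Finset.sum_mul, sum_congr rfl fun j hj => majorantTerm_tsub_single_one_mul_degree b B hm
    (pos_iff_ne_zero.2 (mem_support_iff.1 hj)), ← Finset.sum_mul, degree_apply, Nat.cast_sum,
    mul_comm]

variable [DecidableEq σ]

noncomputable def majorant (ν : σ →₀ ℕ) : ℝ :=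
  ∑ m ∈ Iic ν, majorantTerm b B ν m

theorem majorant_tsub_single_one {ν : σ →₀ ℕ} {j : σ} (hj : j ∈ ν.support) :
    majorant b B (ν - single j 1) = ∑ m ∈ (Iic ν).filter (fun m => j ∈ m.support),
      majorantTerm b B (ν - single j 1) (m - single j 1) := by
  have hjν : (single j 1 : σ →₀ ℕ) ≤ ν :=
    single_le_iff.2 (pos_iff_ne_zero.2 (mem_support_iff.1 hj))
  refine sum_nbij' (· + single j 1) (· - single j 1) (fun m hm => ?_) (fun m hm => ?_)
    (fun m _ => add_tsub_cancel_right m _) (fun m hm => ?_)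
    (fun m _ => by rw [add_tsub_cancel_right])
  · rw [mem_Iic] at hm
    simp [mem_filter, (le_tsub_iff_right hjν).1 hm]
  · rw [mem_filter, mem_Iic] at hm
    exact mem_Iic.2 (tsub_le_tsub_right hm.1 _)
  · rw [mem_filter] at hm
    exact tsub_add_cancel_of_le (single_le_iff.2 (pos_iff_ne_zero.2 (mem_support_iff.1 hm.2)))

theorem majorant_eq_recursion (ν : σ →₀ ℕ) :
    majorant b B ν = ∑ j ∈ ν.support, ν j * b j * majorant b B (ν - single j 1) + B ν := by
  have swap : ∀ f : σ → (σ →₀ ℕ) → ℝ,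
      ∑ j ∈ ν.support, ∑ m ∈ (Iic ν).filter (fun m => j ∈ m.support), f j m
        = ∑ m ∈ (Iic ν).erase 0, ∑ j ∈ m.support, f j m := fun f => by
    refine sum_comm' fun j m => ?_
    simp only [mem_filter, mem_erase, mem_Iic]
    constructor
    · rintro ⟨-, hm, hjm⟩
      exact ⟨hjm, fun h => by simp [h] at hjm, hm⟩
    · rintro ⟨hjm, -, hm⟩
      exact ⟨support_mono hm hjm, hm, hjm⟩
  rw [sum_congr rfl fun j hj => by rw [majorant_tsub_single_one b B hj, Finset.mul_sum], swap,
    sum_congr rfl fun m hm => sum_support_mul_majorantTerm_tsub_single_one b B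
      (mem_Iic.1 (mem_of_mem_erase hm)) (ne_of_mem_erase hm),
    majorant, ← majorantTerm_zero_right b B ν, sum_erase_add _ _ (mem_Iic.2 zero_le)]

end Majorant

theorem le_of_le_recursion {σ : Type*} {A F B : (σ →₀ ℕ) → ℝ}
    {w : (σ →₀ ℕ) → σ → ℝ} (hw : ∀ ν j, 0 ≤ w ν j)
    (hA : ∀ ν, A ν ≤ ∑ j ∈ ν.support, w ν j * A (ν - single j 1) + B ν)
    (hF : ∀ ν, F ν = ∑ j ∈ ν.support, w ν j * F (ν - single j 1) + B ν)
    (ν : σ →₀ ℕ) :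
    A ν ≤ F ν := by
  induction ν using WellFoundedLT.induction with
  | _ ν ih =>
    calc A ν ≤ ∑ j ∈ ν.support, w ν j * A (ν - single j 1) + B ν := hA ν
      _ ≤ ∑ j ∈ ν.support, w ν j * F (ν - single j 1) + B ν :=
        add_le_add_left (sum_le_sum fun j hj =>
          mul_le_mul_of_nonneg_left (ih _ (tsub_single_one_lt hj)) (hw ν j)) _
      _ = F ν := (hF ν).symm

theorem recursive_estimate_one_general
    (b : ℕ → ℝ) (hb : ∀ j, 0 ≤ b j)
    (A B : (ℕ →₀ ℕ) → ℝ)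
    (hrec : ∀ ν : ℕ →₀ ℕ,
      A ν ≤ (∑ j ∈ ν.support, (ν j : ℝ) * b j * A (ν - Finsupp.single j 1)) + B ν) :
    ∀ ν : ℕ →₀ ℕ,
      A ν ≤ ∑ m ∈ Finset.Iic ν,
        ((∏ j ∈ ν.support, (ν j).choose (m j)) : ℝ) *
          (Nat.factorial (m.sum fun _ n => n) : ℝ) *
          (∏ j ∈ m.support, b j ^ m j) * B (ν - m) :=
  le_of_le_recursion (fun _ j => mul_nonneg (Nat.cast_nonneg _) (hb j)) hrec
    (majorant_eq_recursion b B)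

/-- Recursive estimate (Lemma `recur1`): if non-negative numbers `𝔸_ν`, `𝔹_ν` indexed by
finitely supported multi-indices satisfy
`𝔸_ν ≤ ∑_{j ∈ supp(ν)} ν_j b_j 𝔸_{ν − e_j} + 𝔹_ν` for every `ν`, then
`𝔸_ν ≤ ∑_{m ≤ ν} C(ν,m) |m|! b^m 𝔹_{ν − m}` for all `ν`. -/
theorem recursive_estimate_one
    (b : ℕ → ℝ) (hb : ∀ j, 0 ≤ b j)
    (A B : (ℕ →₀ ℕ) → ℝ)
    (hA : ∀ ν, 0 ≤ A ν) (hB : ∀ ν, 0 ≤ B ν)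
    (hrec : ∀ ν : ℕ →₀ ℕ,
      A ν ≤ (∑ j ∈ ν.support, (ν j : ℝ) * b j * A (ν - Finsupp.single j 1)) + B ν) :
    ∀ ν : ℕ →₀ ℕ,
      A ν ≤ ∑ m ∈ Finset.Iic ν,
        ((∏ j ∈ ν.support, (ν j).choose (m j)) : ℝ) *
          (Nat.factorial (m.sum fun _ n => n) : ℝ) *
          (∏ j ∈ m.support, b j ^ m j) * B (ν - m) :=
  recursive_estimate_one_general b hb A B hrec
end

section
/- Define the sequence (Λ_n)_{n≥0} recursively by Λ_0 = 1 and Λ_n = ∑_{i=0}^{n−1} C(n,i) Λ_i for n ≥ 1. Then Λ_n ≤ n! / α^n for all n ≥ 0 and all real α with 0 < α ≤ ln 2. -/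
/-!
Bounding `Λ_i ≤ i!/α^i` inductively, the recursion gives
`Λ_n ≤ n!/α^n · ∑_{1 ≤ k ≤ n} α^k/k! ≤ n!/α^n · (exp α - 1)`,
and `exp α - 1 ≤ 1` exactly when `α ≤ ln 2`.
-/

open Finset

lemma sum_range_pow_sub_div_factorial_sub_le_exp_sub_one {α : ℝ} (hα : 0 ≤ α) (n : ℕ) :
    ∑ i ∈ range n, α ^ (n - i) / (n - i).factorial ≤ Real.exp α - 1 := by
  have hsum : ∑ i ∈ range (n + 1), α ^ (n - i) / (n - i).factorial
      = ∑ k ∈ range (n + 1), α ^ k / k.factorial := by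
    simpa using sum_range_reflect (fun k => α ^ k / k.factorial) (n + 1)
  have hexp := Real.sum_le_exp_of_nonneg hα (n + 1)
  rw [← hsum, sum_range_succ] at hexp
  simp only [Nat.sub_self, pow_zero, Nat.factorial_zero, Nat.cast_one, div_one] at hexp
  linarith

lemma choose_mul_factorial_div_pow {α : ℝ} (hα : α ≠ 0) {n i : ℕ} (hi : i ≤ n) :
    (n.choose i : ℝ) * (i.factorial / α ^ i)
      = n.factorial / α ^ n * (α ^ (n - i) / (n - i).factorial) := by
  have hfac : (n.choose i : ℝ) * i.factorial * (n - i).factorial = n.factorial := by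
    exact_mod_cast Nat.choose_mul_factorial_mul_factorial hi
  have hpow : α ^ (n - i) * α ^ i = α ^ n := by
    rw [← pow_add, Nat.sub_add_cancel hi]
  rw [← hfac, ← hpow]
  field_simp

lemma sum_choose_mul_factorial_div_pow_le {α : ℝ} (hα0 : 0 < α) (hα : Real.exp α ≤ 2)
    (n : ℕ) :
    ∑ i ∈ range n, (n.choose i : ℝ) * (i.factorial / α ^ i) ≤ n.factorial / α ^ n :=
  calc ∑ i ∈ range n, (n.choose i : ℝ) * (i.factorial / α ^ i)
      = n.factorial / α ^ n * ∑ i ∈ range n, α ^ (n - i) / (n - i).factorial := by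
        rw [mul_sum]
        exact sum_congr rfl fun i hi =>
          choose_mul_factorial_div_pow hα0.ne' (mem_range.mp hi).le
    _ ≤ n.factorial / α ^ n * 1 := by
        gcongr
        linarith [sum_range_pow_sub_div_factorial_sub_le_exp_sub_one hα0.le n]
    _ = n.factorial / α ^ n := mul_one _

/-- If `Λ_0 = 1` and `Λ_n = ∑_{i=0}^{n−1} C(n,i) Λ_i` for `n ≥ 1` (the ordered Bell
numbers), then `Λ_n ≤ n!/α^n` for all `n ≥ 0` and all real `0 < α ≤ ln 2`. -/
theorem orderedBell_le_factorial_div_pow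
    (Λ : ℕ → ℝ) (h0 : Λ 0 = 1)
    (hrec : ∀ n : ℕ, 1 ≤ n → Λ n = ∑ i ∈ Finset.range n, (n.choose i : ℝ) * Λ i)
    (α : ℝ) (hα0 : 0 < α) (hα : α ≤ Real.log 2) :
    ∀ n : ℕ, Λ n ≤ (Nat.factorial n : ℝ) / α ^ n := by
  have hexp : Real.exp α ≤ 2 := by
    simpa [Real.exp_log] using Real.exp_le_exp.mpr hα
  intro n
  induction n using Nat.strong_induction_on with
  | _ n ih =>
    rcases Nat.eq_zero_or_pos n with rfl | hn
    · simp [h0]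
    · rw [hrec n hn]
      calc ∑ i ∈ range n, (n.choose i : ℝ) * Λ i
          ≤ ∑ i ∈ range n, (n.choose i : ℝ) * (i.factorial / α ^ i) :=
            sum_le_sum fun i hi => by gcongr; exact ih i (mem_range.mp hi)
        _ ≤ n.factorial / α ^ n := sum_choose_mul_factorial_div_pow_le hα0 hexp n
end

section
/- Let β = (β_j)_{j≥1} be a sequence of non-negative reals, and let (𝔸_ν), (𝔹_ν) be non-negative numbers indexed by finitely supported multi-indices satisfying 𝔸_ν ≤ ∑_{m ≤ ν, m ≠ ν} C(ν, m) β^{ν−m} 𝔸_m + 𝔹_ν for every finitely supported ν (including ν = 0). Then 𝔸_ν ≤ ∑_{k ≤ ν} C(ν, k) Λ_{|k|} β^k 𝔹_{ν−k} for all finitely supported ν, where Λ_0 = 1 and Λ_n = ∑_{i=0}^{n−1} C(n,i) Λ_i for n ≥ 1. -/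
/-!
The bound `S ν = ∑_{k ≤ ν} C(ν,k) Λ_{|k|} β^k B(ν-k)` satisfies the recursion with equality, so
well-founded induction on `ν` gives `A ≤ S`. To see the equality, expand each `S m` on the right,
reindex the double sum by `k = ν - m + l` (using `C(ν,m) C(m,l) = C(ν,k) C(k,l)`), and evaluate
the inner sum over `l < k` by the multi-index Vandermonde identity
`∑_{l ≤ k, |l| = i} C(k,l) = C(|k|,i)`, read off from `∏_j (X + 1)^{k_j} = (X + 1)^{|k|}`:
it becomes the recursion defining `Λ_{|k|}`.
-/

open Finset Polynomial

theorem Nat.choose_mul_choose_tsub_add {n m l : ℕ} (hl : l ≤ m) (hm : m ≤ n) :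
    n.choose m * m.choose l = n.choose (n - m + l) * (n - m + l).choose l := by
  rw [Nat.choose_mul hl, Nat.choose_mul (by omega : l ≤ n - m + l), Nat.add_sub_cancel,
    Nat.choose_symm_of_eq_add (by omega : n - l = m - l + (n - m))]

section Reindex

variable {α M : Type*} [AddCommMonoid α] [PartialOrder α] [CanonicallyOrderedAdd α]
  [IsOrderedCancelAddMonoid α] [Sub α] [OrderedSub α] [AddCommMonoid M]

theorem tsub_tsub_add_add_cancel {ν m l : α} (hl : l ≤ m) (hm : m ≤ ν) :
    ν - (ν - m + l) + l = m := by
  rw [tsub_add_eq_tsub_tsub, tsub_tsub_cancel_of_le hm, tsub_add_cancel_of_le hl]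

theorem tsub_add_le_of_le_of_le {ν m l : α} (hl : l ≤ m) (hm : m ≤ ν) : ν - m + l ≤ ν :=
  calc ν - m + l ≤ ν - m + m := add_le_add_right hl _
    _ = ν := tsub_add_cancel_of_le hm

variable [LocallyFiniteOrderBot α] [DecidableEq α]

-- `(m, l) ↦ (ν - m + l, l)` is an involution exchanging the two index sets.
theorem sum_erase_Iic_sum_Iic_tsub_add (ν : α) (f : α → α → M) :
    ∑ m ∈ (Iic ν).erase ν, ∑ l ∈ Iic m, f (ν - m + l) l =
      ∑ k ∈ (Iic ν).erase 0, ∑ l ∈ (Iic k).erase k, f k l := by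
  rw [sum_sigma', sum_sigma']
  refine sum_nbij' (fun x => ⟨ν - x.1 + x.2, x.2⟩) (fun x => ⟨ν - x.1 + x.2, x.2⟩)
    ?_ ?_ ?_ ?_ fun _ _ => rfl
  · rintro ⟨m, l⟩ hx
    simp only [mem_sigma, mem_erase, mem_Iic] at hx ⊢
    obtain ⟨⟨hmν, hm⟩, hl⟩ := hx
    have hlk : l ≠ ν - m + l := fun h => hmν <| le_antisymm hm <|
      tsub_eq_zero_iff_le.1 (right_eq_add.1 h)
    exact ⟨⟨fun h => hlk (by rw [h]; exact (add_eq_zero.1 h).2),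
      tsub_add_le_of_le_of_le hl hm⟩, hlk, le_add_self⟩
  · rintro ⟨k, l⟩ hx
    simp only [mem_sigma, mem_erase, mem_Iic] at hx ⊢
    obtain ⟨⟨-, hk⟩, hlk, hl⟩ := hx
    refine ⟨⟨fun h => hlk (add_left_cancel (h.trans (tsub_add_cancel_of_le hk).symm)),
      tsub_add_le_of_le_of_le hl hk⟩, le_add_self⟩
  · rintro ⟨m, l⟩ hx
    simp only [mem_sigma, mem_erase, mem_Iic] at hx
    simp only [tsub_tsub_add_add_cancel hx.2 hx.1.2]
  · rintro ⟨k, l⟩ hx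
    simp only [mem_sigma, mem_erase, mem_Iic] at hx
    simp only [tsub_tsub_add_add_cancel hx.2.2 hx.1.2]

end Reindex

namespace Finsupp

variable {σ : Type*}

theorem degree_eq_sum_of_support_subset (l : σ →₀ ℕ) {s : Finset σ} (hs : l.support ⊆ s) :
    l.degree = ∑ j ∈ s, l j :=
  sum_subset hs fun _ _ hj => notMem_support_iff.1 hj

theorem degree_le_degree {l k : σ →₀ ℕ} (h : l ≤ k) : l.degree ≤ k.degree := by
  obtain ⟨d, rfl⟩ := exists_add_of_le h
  simp

def choose (ν m : σ →₀ ℕ) : ℕ := ∏ j ∈ ν.support, (ν j).choose (m j)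

theorem choose_zero_right (ν : σ →₀ ℕ) : ν.choose 0 = 1 := by
  simp [choose]

theorem choose_self (ν : σ →₀ ℕ) : ν.choose ν = 1 := by
  simp [choose]

theorem choose_eq_prod_of_support_subset {ν m : σ →₀ ℕ} (hm : m ≤ ν) {s : Finset σ}
    (hs : ν.support ⊆ s) : ν.choose m = ∏ j ∈ s, (ν j).choose (m j) :=
  Finset.prod_subset hs fun j _ hj => by
    have hν : ν j = 0 := notMem_support_iff.1 hj
    have hmj : m j = 0 := Nat.eq_zero_of_le_zero (hν ▸ hm j)
    simp [hν, hmj]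

theorem choose_mul_choose_tsub_add {ν m l : σ →₀ ℕ} (hl : l ≤ m) (hm : m ≤ ν) :
    ν.choose m * m.choose l = ν.choose (ν - m + l) * (ν - m + l).choose l := by
  have hk : ν - m + l ≤ ν := tsub_add_le_of_le_of_le hl hm
  rw [choose_eq_prod_of_support_subset hm subset_rfl,
    choose_eq_prod_of_support_subset hl (support_mono hm),
    choose_eq_prod_of_support_subset hk subset_rfl,
    choose_eq_prod_of_support_subset le_add_self (support_mono hk), ← prod_mul_distrib,
    ← prod_mul_distrib]
  exact Finset.prod_congr rfl fun j _ => Nat.choose_mul_choose_tsub_add (hl j) (hm j)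

variable [DecidableEq σ]

theorem sum_Iic_prod {R : Type*} [CommSemiring R] (k : σ →₀ ℕ) (h : σ → ℕ → R) :
    ∑ l ∈ Iic k, ∏ j ∈ k.support, h j (l j) = ∏ j ∈ k.support, ∑ c ∈ Iic (k j), h j c := by
  rw [prod_sum, Iic_eq_Icc, Icc_eq, bot_eq_zero, support_zero, empty_union, Finset.finsupp,
    sum_map]
  refine Finset.sum_congr (by congr! 1) fun p _ => ?_
  rw [← prod_attach]
  exact Finset.prod_congr rfl fun j _ => by simp [indicator_of_mem j.2]

theorem sum_Iic_choose_mul_X_pow_degree (k : σ →₀ ℕ) :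
    ∑ l ∈ Iic k, C (k.choose l) * X ^ l.degree = (X + 1 : ℕ[X]) ^ k.degree := by
  calc ∑ l ∈ Iic k, C (k.choose l) * X ^ l.degree
      = ∑ l ∈ Iic k, ∏ j ∈ k.support, C ((k j).choose (l j)) * X ^ l j :=
        Finset.sum_congr rfl fun l hl => by
          rw [prod_mul_distrib, prod_pow_eq_pow_sum, ← map_prod, choose,
            ← degree_eq_sum_of_support_subset l (support_mono (mem_Iic.1 hl))]
    _ = ∏ j ∈ k.support, ∑ c ∈ Iic (k j), C ((k j).choose c) * X ^ c :=
        sum_Iic_prod k fun j c => C ((k j).choose c) * X ^ c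
    _ = ∏ j ∈ k.support, (X + 1) ^ k j := Finset.prod_congr rfl fun j _ => by
          rw [add_pow, ← Nat.range_succ_eq_Iic]
          exact Finset.sum_congr rfl fun c _ => by
            rw [one_pow, mul_one, mul_comm, ← C_eq_natCast, Nat.cast_id]
    _ = (X + 1) ^ k.degree := by rw [prod_pow_eq_pow_sum, degree_apply]

theorem sum_Iic_choose_filter_degree_eq (k : σ →₀ ℕ) (i : ℕ) :
    ∑ l ∈ Iic k with l.degree = i, k.choose l = k.degree.choose i := by
  have := congr_arg (coeff · i) (sum_Iic_choose_mul_X_pow_degree k)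
  simpa [finsetSum_coeff, coeff_C_mul_X_pow, coeff_X_add_one_pow, sum_filter, eq_comm] using this

theorem sum_Iic_choose_mul_degree {R : Type*} [Semiring R] (k : σ →₀ ℕ) (g : ℕ → R) :
    ∑ l ∈ Iic k, (k.choose l : R) * g l.degree =
      ∑ i ∈ range (k.degree + 1), (k.degree.choose i : R) * g i := by
  rw [← sum_fiberwise_of_maps_to (g := degree) (t := range (k.degree + 1))
    fun l hl => mem_range_succ_iff.2 (degree_le_degree (mem_Iic.1 hl))]
  refine Finset.sum_congr rfl fun n _ => ?_
  rw [← sum_Iic_choose_filter_degree_eq, Nat.cast_sum, Finset.sum_mul]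
  exact Finset.sum_congr rfl fun l hl => by rw [(mem_filter.1 hl).2]

theorem sum_erase_Iic_choose_mul_orderedBell {R : Type*} [CommRing R] {Λ : ℕ → R}
    (hΛ : ∀ n : ℕ, 1 ≤ n → Λ n = ∑ i ∈ range n, (n.choose i : R) * Λ i) {k : σ →₀ ℕ}
    (hk : k ≠ 0) :
    ∑ l ∈ (Iic k).erase k, (k.choose l : R) * Λ l.degree = Λ k.degree := by
  have h := sum_Iic_choose_mul_degree k Λ
  rw [sum_range_succ, Nat.choose_self, Nat.cast_one, one_mul,
    ← hΛ _ (Nat.one_le_iff_ne_zero.2 ((degree_eq_zero_iff k).not.2 hk)),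
    ← Finset.add_sum_erase _ _ (mem_Iic.2 le_rfl), choose_self, Nat.cast_one, one_mul] at h
  exact add_left_cancel h

section Bound

variable {R : Type*} [CommRing R] (β : σ → R) (Λ : ℕ → R) (B : (σ →₀ ℕ) → R)

noncomputable def orderedBellBound (ν : σ →₀ ℕ) : R :=
  ∑ k ∈ Iic ν, (ν.choose k : R) * Λ k.degree * (k.prod fun j n => β j ^ n) * B (ν - k)

theorem orderedBellBound_eq (hΛ0 : Λ 0 = 1)
    (hΛ : ∀ n : ℕ, 1 ≤ n → Λ n = ∑ i ∈ range n, (n.choose i : R) * Λ i) (ν : σ →₀ ℕ) :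
    orderedBellBound β Λ B ν = ∑ m ∈ (Iic ν).erase ν,
      (ν.choose m : R) * ((ν - m).prod fun j n => β j ^ n) * orderedBellBound β Λ B m + B ν := by
  calc orderedBellBound β Λ B ν
      = ∑ k ∈ (Iic ν).erase 0,
          (ν.choose k : R) * Λ k.degree * (k.prod fun j n => β j ^ n) * B (ν - k) + B ν := by
        rw [orderedBellBound, ← Finset.add_sum_erase _ _ (mem_Iic.2 bot_le), add_comm]
        simp [choose_zero_right, hΛ0]
    _ = ∑ k ∈ (Iic ν).erase 0, ∑ l ∈ (Iic k).erase k,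
          (ν.choose k * k.choose l : R) * Λ l.degree * (k.prod fun j n => β j ^ n) * B (ν - k)
          + B ν := by
        congr 1
        refine Finset.sum_congr rfl fun k hk => ?_
        rw [← sum_erase_Iic_choose_mul_orderedBell hΛ (ne_of_mem_erase hk), Finset.mul_sum,
          Finset.sum_mul, Finset.sum_mul]
        exact Finset.sum_congr rfl fun l _ => by ring
    _ = ∑ m ∈ (Iic ν).erase ν, ∑ l ∈ Iic m,
          (ν.choose (ν - m + l) * (ν - m + l).choose l : R) * Λ l.degree *
            ((ν - m + l).prod fun j n => β j ^ n) * B (ν - (ν - m + l)) + B ν := by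
        rw [sum_erase_Iic_sum_Iic_tsub_add ν fun k l =>
          (ν.choose k * k.choose l : R) * Λ l.degree * (k.prod fun j n => β j ^ n) * B (ν - k)]
    _ = _ := by
        congr 1
        refine Finset.sum_congr rfl fun m hm => ?_
        have hmν := mem_Iic.1 (mem_of_mem_erase hm)
        rw [orderedBellBound, Finset.mul_sum]
        refine Finset.sum_congr rfl fun l hl => ?_
        have hlm := mem_Iic.1 hl
        rw [← Nat.cast_mul, ← choose_mul_choose_tsub_add hlm hmν, Nat.cast_mul,
          prod_add_index' (fun _ => pow_zero _) fun _ _ _ => pow_add _ _ _,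
          tsub_add_eq_tsub_tsub, tsub_tsub_cancel_of_le hmν]
        ring

theorem le_orderedBellBound [PartialOrder R] [IsOrderedRing R] {A : (σ →₀ ℕ) → R}
    (hβ : ∀ j, 0 ≤ β j) (hΛ0 : Λ 0 = 1)
    (hΛ : ∀ n : ℕ, 1 ≤ n → Λ n = ∑ i ∈ range n, (n.choose i : R) * Λ i)
    (hrec : ∀ ν, A ν ≤ ∑ m ∈ (Iic ν).erase ν,
      (ν.choose m : R) * ((ν - m).prod fun j n => β j ^ n) * A m + B ν)
    (ν : σ →₀ ℕ) : A ν ≤ orderedBellBound β Λ B ν := by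
  induction ν using WellFoundedLT.induction with
  | _ ν ih =>
  calc A ν ≤ _ := hrec ν
    _ ≤ ∑ m ∈ (Iic ν).erase ν, (ν.choose m : R) * ((ν - m).prod fun j n => β j ^ n) *
          orderedBellBound β Λ B m + B ν := by
      gcongr with m hm
      · exact mul_nonneg (Nat.cast_nonneg _) (Finset.prod_nonneg fun j _ => pow_nonneg (hβ j) _)
      · exact ih m (lt_of_le_of_ne (mem_Iic.1 (mem_of_mem_erase hm)) (ne_of_mem_erase hm))
    _ = orderedBellBound β Λ B ν := (orderedBellBound_eq β Λ B hΛ0 hΛ ν).symm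

end Bound

end Finsupp

theorem recursive_estimate_two_general
    (β : ℕ → ℝ) (hβ : ∀ j, 0 ≤ β j)
    (A B : (ℕ →₀ ℕ) → ℝ)
    (hrec : ∀ ν : ℕ →₀ ℕ,
      A ν ≤ (∑ m ∈ (Finset.Iic ν).erase ν,
          ((∏ j ∈ ν.support, (ν j).choose (m j)) : ℝ) *
            (∏ j ∈ (ν - m).support, β j ^ ((ν - m) j)) * A m) + B ν)
    (Λ : ℕ → ℝ) (hΛ0 : Λ 0 = 1)
    (hΛ : ∀ n : ℕ, 1 ≤ n → Λ n = ∑ i ∈ Finset.range n, (n.choose i : ℝ) * Λ i) :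
    ∀ ν : ℕ →₀ ℕ,
      A ν ≤ ∑ k ∈ Finset.Iic ν,
        ((∏ j ∈ ν.support, (ν j).choose (k j)) : ℝ) *
          Λ (k.sum fun _ n => n) *
          (∏ j ∈ k.support, β j ^ k j) * B (ν - k) := by
  intro ν
  have h := Finsupp.le_orderedBellBound β Λ B hβ hΛ0 hΛ
    (fun ν => by simp only [Finsupp.choose, Nat.cast_prod]; exact hrec ν) ν
  simp only [Finsupp.orderedBellBound, Finsupp.choose, Nat.cast_prod] at h
  -- `Finsupp.degree` and `Finsupp.prod` unfold to the sum and product written in the statement.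
  exact h

/-- Recursive estimate (Lemma `recur2`): if non-negative numbers `𝔸_ν`, `𝔹_ν` indexed by
finitely supported multi-indices satisfy
`𝔸_ν ≤ ∑_{m ≤ ν, m ≠ ν} C(ν,m) β^{ν−m} 𝔸_m + 𝔹_ν` for every `ν`, then
`𝔸_ν ≤ ∑_{k ≤ ν} C(ν,k) Λ_{|k|} β^k 𝔹_{ν−k}` for all `ν`, where `Λ` are the
ordered Bell numbers. -/
theorem recursive_estimate_two
    (β : ℕ → ℝ) (hβ : ∀ j, 0 ≤ β j)
    (A B : (ℕ →₀ ℕ) → ℝ)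
    (hA : ∀ ν, 0 ≤ A ν) (hB : ∀ ν, 0 ≤ B ν)
    (hrec : ∀ ν : ℕ →₀ ℕ,
      A ν ≤ (∑ m ∈ (Finset.Iic ν).erase ν,
          ((∏ j ∈ ν.support, (ν j).choose (m j)) : ℝ) *
            (∏ j ∈ (ν - m).support, β j ^ ((ν - m) j)) * A m) + B ν)
    (Λ : ℕ → ℝ) (hΛ0 : Λ 0 = 1)
    (hΛ : ∀ n : ℕ, 1 ≤ n → Λ n = ∑ i ∈ Finset.range n, (n.choose i : ℝ) * Λ i) :
    ∀ ν : ℕ →₀ ℕ,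
      A ν ≤ ∑ k ∈ Finset.Iic ν,
        ((∏ j ∈ ν.support, (ν j).choose (k j)) : ℝ) *
          Λ (k.sum fun _ n => n) *
          (∏ j ∈ k.support, β j ^ k j) * B (ν - k) :=
  recursive_estimate_two_general β hβ A B hrec Λ hΛ0 hΛ
end

section
/- Let (b_j)_{j≥1} be a non-increasing sequence of non-negative reals and suppose there exists p ∈ (0,1) with ∑_{j≥1} b_j^p < ∞. Then for every integer s ≥ 1, ∑_{j ≥ s+1} b_j ≤ min(1/(1/p − 1), 1) · (∑_{j≥1} b_j^p)^{1/p} · s^{−(1/p − 1)}. -/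
open Finset in
/-- One-step comparison: `(q-1) * (x+1)^(-q) ≤ x^(1-q) - (x+1)^(1-q)`. -/
lemma stechkin_step (q : ℝ) (hq : 1 < q) (x : ℝ) (hx : 0 < x) :
    (q - 1) * (x + 1) ^ (-q) ≤ x ^ (1 - q) - (x + 1) ^ (1 - q) := by
  have hx1 : (0:ℝ) < x + 1 := by linarith
  have hmem : (0:ℝ) ∉ Set.uIcc x (x + 1) := by
    rw [Set.uIcc_of_le (by linarith)]
    intro h
    exact absurd h.1 (by linarith)
  have hI : ∫ t in x..(x + 1), t ^ (-q) = ((x+1) ^ (-q + 1) - x ^ (-q + 1)) / (-q + 1) :=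
    integral_rpow (Or.inr ⟨by intro h; rw [neg_inj] at h; linarith, hmem⟩)
  have hint : IntervalIntegrable (fun t : ℝ => t ^ (-q)) MeasureTheory.volume x (x + 1) := by
    apply ContinuousOn.intervalIntegrable
    intro t ht
    rw [Set.uIcc_of_le (by linarith)] at ht
    exact (Real.continuousAt_rpow_const t (-q)
      (Or.inl (by have := ht.1; intro h; rw [h] at this; linarith))).continuousWithinAt
  have hmono : ∀ t ∈ Set.Icc x (x + 1), (fun _ : ℝ => (x+1) ^ (-q)) t ≤ t ^ (-q) := by
    intro t ht
    exact Real.rpow_le_rpow_of_nonpos (lt_of_lt_of_le hx ht.1) ht.2 (by linarith)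
  have h1 : (x + 1) ^ (-q) ≤ ∫ t in x..(x + 1), t ^ (-q) := by
    have := intervalIntegral.integral_mono_on (by linarith : x ≤ x + 1)
      intervalIntegrable_const hint hmono
    simpa using this
  rw [hI] at h1
  have hne : -q + 1 ≠ 0 := by intro h; linarith
  have heq : (q - 1) * (((x+1) ^ (-q + 1) - x ^ (-q + 1)) / (-q + 1))
      = x ^ (-q + 1) - (x+1) ^ (-q + 1) := by
    field_simp
    ring
  have e1 : (1 : ℝ) - q = -q + 1 := by ring
  rw [e1]
  nlinarith [mul_le_mul_of_nonneg_left h1 (by linarith : (0:ℝ) ≤ q - 1)]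

lemma stechkin_zeta_summable (q : ℝ) (hq : 1 < q) (s : ℕ) :
    Summable (fun j : ℕ => ((s : ℝ) + j + 1) ^ (-q)) := by
  have h : Summable (fun n : ℕ => (n : ℝ) ^ (-q)) :=
    Real.summable_nat_rpow.2 (by linarith)
  have h2 := (summable_nat_add_iff (s + 1)).2 h
  apply h2.congr
  intro j
  congr 1
  push_cast
  ring

lemma stechkin_zeta_tail (q : ℝ) (hq : 1 < q) (s : ℕ) (hs : 1 ≤ s) :
    ∑' j : ℕ, ((s : ℝ) + j + 1) ^ (-q) ≤ (s : ℝ) ^ (1 - q) / (q - 1) := by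
  have hq1 : (0:ℝ) < q - 1 := by linarith
  have hs1 : (1:ℝ) ≤ (s : ℝ) := by exact_mod_cast hs
  apply Real.tsum_le_of_sum_range_le
  · intro n; positivity
  intro N
  set g : ℕ → ℝ := fun j => ((s : ℝ) + j) ^ (1 - q) with hg
  have key : ∀ j ∈ Finset.range N,
      (q - 1) * (((s : ℝ) + j + 1) ^ (-q)) ≤ g j - g (j + 1) := by
    intro j _
    have hx : (0:ℝ) < (s : ℝ) + j := by
      have : (0:ℝ) ≤ (j : ℝ) := Nat.cast_nonneg j
      linarith
    have := stechkin_step q hq ((s : ℝ) + j) hx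
    simp only [hg]
    push_cast
    convert this using 3 <;> ring
  have h2 : ∑ j ∈ Finset.range N, (q - 1) * (((s : ℝ) + j + 1) ^ (-q))
      ≤ (s : ℝ) ^ (1 - q) := by
    calc ∑ j ∈ Finset.range N, (q - 1) * (((s : ℝ) + j + 1) ^ (-q))
        ≤ ∑ j ∈ Finset.range N, (g j - g (j + 1)) := Finset.sum_le_sum key
      _ = g 0 - g N := Finset.sum_range_sub' g N
      _ ≤ g 0 := by
          have : 0 ≤ g N := by
            apply Real.rpow_nonneg
            have : (0:ℝ) ≤ (N : ℝ) := Nat.cast_nonneg N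
            linarith
          linarith
      _ = (s : ℝ) ^ (1 - q) := by simp [hg]
  rw [← Finset.mul_sum] at h2
  rw [le_div_iff₀ hq1]
  linarith [h2]

/-- Stechkin-type tail estimate: for a non-increasing sequence `b_1 ≥ b_2 ≥ ⋯ ≥ 0`
(here `b j` denotes `b_{j+1}`) with `∑_j b_j^p < ∞` for some `p ∈ (0,1)`, for every
`s ≥ 1`,
`∑_{j ≥ s+1} b_j ≤ min(1/(1/p − 1), 1) · (∑_{j≥1} b_j^p)^{1/p} · s^{−(1/p − 1)}`. -/
theorem stechkin_tail_estimate
    (b : ℕ → ℝ) (hnn : ∀ j, 0 ≤ b j) (hmono : ∀ j k, j ≤ k → b k ≤ b j)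
    (p : ℝ) (hp0 : 0 < p) (hp1 : p < 1)
    (hsum : Summable (fun j => b j ^ p)) :
    ∀ s : ℕ, 1 ≤ s →
      (∑' j : ℕ, b (s + j))
        ≤ min (1 / (1 / p - 1)) 1 * (∑' j : ℕ, b j ^ p) ^ (1 / p) *
            (s : ℝ) ^ (-(1 / p - 1)) := by
  intro s hs
  set q : ℝ := 1 / p with hqdef
  set C : ℝ := ∑' j : ℕ, b j ^ p with hCdef
  have hC0 : 0 ≤ C := tsum_nonneg fun j => Real.rpow_nonneg (hnn j) p
  have hq : 1 < q := (one_lt_div hp0).2 hp1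
  have hs1 : (1:ℝ) ≤ (s : ℝ) := by exact_mod_cast hs
  have hsR : (0:ℝ) < (s : ℝ) := by linarith
  -- pointwise bound
  have hpt : ∀ n : ℕ, b n ^ p * ((n : ℝ) + 1) ≤ C := by
    intro n
    have h1 : ∀ i ∈ Finset.range (n + 1), b n ^ p ≤ b i ^ p := fun i hi =>
      Real.rpow_le_rpow (hnn n) (hmono i n (Nat.lt_succ_iff.mp (Finset.mem_range.mp hi))) hp0.le
    calc b n ^ p * ((n : ℝ) + 1) = ∑ _i ∈ Finset.range (n + 1), b n ^ p := by
          simp [Finset.sum_const, mul_comm]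
      _ ≤ ∑ i ∈ Finset.range (n + 1), b i ^ p := Finset.sum_le_sum h1
      _ ≤ C := Summable.sum_le_tsum _ (fun i _ => Real.rpow_nonneg (hnn i) p) hsum
  have hbn : ∀ n : ℕ, b n ≤ (C / ((n : ℝ) + 1)) ^ q := by
    intro n
    have hn1 : (0:ℝ) < (n : ℝ) + 1 := by positivity
    have h2 : b n ^ p ≤ C / ((n : ℝ) + 1) := by
      rw [le_div_iff₀ hn1]; exact hpt n
    have h3 : (b n ^ p) ^ q = b n := by
      rw [← Real.rpow_mul (hnn n), show p * q = 1 by rw [hqdef]; field_simp,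
        Real.rpow_one]
    calc b n = (b n ^ p) ^ q := h3.symm
      _ ≤ (C / ((n : ℝ) + 1)) ^ q := Real.rpow_le_rpow (Real.rpow_nonneg (hnn n) p) h2
          (by linarith)
  -- summability of shifted sequences
  have hsum_shift_p : Summable (fun j : ℕ => b (s + j) ^ p) := by
    have h := (summable_nat_add_iff s).2 hsum
    exact h.congr fun j => by rw [add_comm]
  have hle : ∀ j : ℕ, b (s + j) ≤ b s ^ (1 - p) * b (s + j) ^ p := by
    intro j
    have h1 : b (s + j) = b (s + j) ^ (1 - p) * b (s + j) ^ p := by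
      rw [← Real.rpow_add' (hnn _) (by norm_num : (1 - p) + p ≠ 0)]
      norm_num
    calc b (s + j) = b (s + j) ^ (1 - p) * b (s + j) ^ p := h1
      _ ≤ b s ^ (1 - p) * b (s + j) ^ p :=
          mul_le_mul_of_nonneg_right
            (Real.rpow_le_rpow (hnn _) (hmono s (s + j) (Nat.le_add_right s j))
              (by linarith)) (Real.rpow_nonneg (hnn _) p)
  have hsum_shift : Summable (fun j : ℕ => b (s + j)) :=
    Summable.of_nonneg_of_le (fun j => hnn _) hle (hsum_shift_p.mul_left _)
  set K : ℝ := C ^ q * (s : ℝ) ^ (-(q - 1)) with hKdef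
  have hK0 : 0 ≤ K :=
    mul_nonneg (Real.rpow_nonneg hC0 q) (Real.rpow_nonneg hsR.le _)
  -- Bound 1 : T ≤ K
  have hT1 : (∑' j : ℕ, b (s + j)) ≤ K := by
    have hts : (∑' j : ℕ, b (s + j)) ≤ b s ^ (1 - p) * C := by
      calc (∑' j : ℕ, b (s + j)) ≤ ∑' j : ℕ, b s ^ (1 - p) * b (s + j) ^ p :=
            Summable.tsum_le_tsum hle hsum_shift (hsum_shift_p.mul_left _)
        _ = b s ^ (1 - p) * ∑' j : ℕ, b (s + j) ^ p := tsum_mul_left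
        _ ≤ b s ^ (1 - p) * C := by
            apply mul_le_mul_of_nonneg_left _ (Real.rpow_nonneg (hnn s) _)
            exact Summable.tsum_le_tsum_of_inj (fun j => s + j) (add_right_injective s)
              (fun c _ => Real.rpow_nonneg (hnn c) p) (fun j => le_rfl)
              hsum_shift_p hsum
    have hbs : b s ≤ (C / (s : ℝ)) ^ q := by
      refine (hbn s).trans (Real.rpow_le_rpow (by positivity) ?_ (by linarith))
      exact div_le_div_of_nonneg_left hC0 hsR (by linarith)
    have hbs2 : b s ^ (1 - p) ≤ (C / (s : ℝ)) ^ (q - 1) := by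
      have h3 : ((C / (s : ℝ)) ^ q) ^ (1 - p) = (C / (s : ℝ)) ^ (q - 1) := by
        rw [← Real.rpow_mul (by positivity)]
        congr 1
        rw [hqdef]
        field_simp
      calc b s ^ (1 - p) ≤ ((C / (s : ℝ)) ^ q) ^ (1 - p) :=
            Real.rpow_le_rpow (hnn s) hbs (by linarith)
        _ = (C / (s : ℝ)) ^ (q - 1) := h3
    have h4 : (C / (s : ℝ)) ^ (q - 1) * C = K := by
      rw [hKdef, Real.div_rpow hC0 hsR.le, Real.rpow_neg hsR.le]
      have h5 : C ^ (q - 1) * C = C ^ q := by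
        nth_rewrite 2 [← Real.rpow_one C]
        have hqne : q - 1 + 1 ≠ 0 := by intro h; linarith
        rw [← Real.rpow_add' hC0 hqne]
        congr 1
        ring
      field_simp
      linear_combination h5
    calc (∑' j : ℕ, b (s + j)) ≤ b s ^ (1 - p) * C := hts
      _ ≤ (C / (s : ℝ)) ^ (q - 1) * C := mul_le_mul_of_nonneg_right hbs2 hC0
      _ = K := h4
  -- Bound 2 : T ≤ (1/(q-1)) * K
  have hT2 : (∑' j : ℕ, b (s + j)) ≤ 1 / (q - 1) * K := by
    have hzsum := stechkin_zeta_summable q hq s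
    have hb2 : ∀ j : ℕ, b (s + j) ≤ C ^ q * ((s : ℝ) + j + 1) ^ (-q) := by
      intro j
      have h1 := hbn (s + j)
      have hcast : ((s + j : ℕ) : ℝ) + 1 = (s : ℝ) + j + 1 := by push_cast; ring
      rw [hcast] at h1
      have hpos : (0:ℝ) < (s : ℝ) + j + 1 := by
        have : (0:ℝ) ≤ (j : ℝ) := Nat.cast_nonneg j
        linarith
      rwa [Real.div_rpow hC0 hpos.le, div_eq_mul_inv, ← Real.rpow_neg hpos.le] at h1
    calc (∑' j : ℕ, b (s + j)) ≤ ∑' j : ℕ, C ^ q * ((s : ℝ) + j + 1) ^ (-q) :=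
          Summable.tsum_le_tsum hb2 hsum_shift (hzsum.mul_left _)
      _ = C ^ q * ∑' j : ℕ, ((s : ℝ) + j + 1) ^ (-q) := tsum_mul_left
      _ ≤ C ^ q * ((s : ℝ) ^ (1 - q) / (q - 1)) :=
          mul_le_mul_of_nonneg_left (stechkin_zeta_tail q hq s hs)
            (Real.rpow_nonneg hC0 q)
      _ = 1 / (q - 1) * K := by
          rw [hKdef, show (1 : ℝ) - q = -(q - 1) by ring]
          ring
  have hmin : min (1 / (q - 1)) 1 * C ^ q * (s : ℝ) ^ (-(q - 1))
      = min (1 / (q - 1) * K) (1 * K) := by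
    rw [mul_assoc, ← hKdef, min_mul_of_nonneg _ _ hK0]
  rw [hmin]
  exact le_min hT2 (by simpa using hT1)
end

section
/- Let w_u > 0 and c_u > 0 for each nonempty subset u of {1,…,s}, let λ ∈ (0,1], and consider C(γ) = (∑_u γ_u^λ w_u)^{1/λ} · (∑_u c_u²/γ_u) as a function of positive weights (γ_u). Then C(γ) is minimized by the choice γ_u = (c_u / √(w_u))^{2/(1+λ)}. -/
/-!
Hölder's inequality with exponents `1 + λ` and `(1 + λ) / λ`, applied to the factors
`(γᵤ^λ wᵤ)^(1/(1+λ))` and `(cᵤ²/γᵤ)^(λ/(1+λ))`, whose product `wᵤ^(1/(1+λ)) (cᵤ²)^(λ/(1+λ))` does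
not depend on `γ`, bounds `C(γ)` below by `(∑ᵤ wᵤ^(1/(1+λ)) (cᵤ²)^(λ/(1+λ)))^((1+λ)/λ)`.
The choice `γ*` balances the two sums termwise, `γ*ᵤ^λ wᵤ = cᵤ²/γ*ᵤ`, and at such a point the
bound is attained.
-/

open Finset Real

-- The `C(γ)` of the theorem, with `p = λ`, `a = w`, `b = c²`.
noncomputable def weightCost {ι : Type*} (s : Finset ι) (p : ℝ) (a b x : ι → ℝ) : ℝ :=
  (∑ i ∈ s, x i ^ p * a i) ^ (1 / p) * ∑ i ∈ s, b i / x i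

lemma holderConjugate_one_add_div_self {p : ℝ} (hp : 0 < p) :
    (1 + p).HolderConjugate ((1 + p) / p) :=
  (holderConjugate_iff_eq_conjExponent (by linarith)).2 (by rw [add_sub_cancel_left])

lemma rpow_mul_mul_div_rpow_eq {x a b p : ℝ} (hx : 0 < x) (ha : 0 ≤ a) (hb : 0 ≤ b) :
    (x ^ p * a) ^ (1 / (1 + p)) * (b / x) ^ (p / (1 + p)) =
      a ^ (1 / (1 + p)) * b ^ (p / (1 + p)) := by
  rw [mul_rpow (rpow_nonneg hx.le _) ha, div_rpow hb hx.le, ← rpow_mul hx.le, mul_one_div]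
  have : 0 < x ^ (p / (1 + p)) := rpow_pos_of_pos hx _
  field_simp

lemma rpow_mul_eq_div_of_rpow_one_add_eq {x a b p : ℝ} (hx : 0 < x) (ha : a ≠ 0)
    (h : x ^ (1 + p) = b / a) : x ^ p * a = b / x := by
  rw [rpow_add hx, rpow_one, eq_div_iff ha] at h
  rw [eq_div_iff hx.ne', ← h]
  ring

section
variable {ι : Type*} (s : Finset ι) {p : ℝ} {a b x : ι → ℝ}

theorem sum_rpow_mul_rpow_le (hp : 0 < p) (ha : ∀ i ∈ s, 0 ≤ a i) (hb : ∀ i ∈ s, 0 ≤ b i)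
    (hx : ∀ i ∈ s, 0 < x i) :
    ∑ i ∈ s, a i ^ (1 / (1 + p)) * b i ^ (p / (1 + p)) ≤
      (∑ i ∈ s, x i ^ p * a i) ^ (1 / (1 + p)) * (∑ i ∈ s, b i / x i) ^ (p / (1 + p)) := by
  have hxa : ∀ i ∈ s, 0 ≤ x i ^ p * a i := fun i hi =>
    mul_nonneg (rpow_nonneg (hx i hi).le _) (ha i hi)
  have hbx : ∀ i ∈ s, 0 ≤ b i / x i := fun i hi => div_nonneg (hb i hi) (hx i hi).le
  have holder := inner_le_Lp_mul_Lq_of_nonneg s (holderConjugate_one_add_div_self hp)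
    (fun i hi => rpow_nonneg (hxa i hi) (1 / (1 + p)))
    (fun i hi => rpow_nonneg (hbx i hi) (p / (1 + p)))
  rw [sum_congr rfl fun i hi => rpow_mul_mul_div_rpow_eq (hx i hi) (ha i hi) (hb i hi)] at holder
  have hf : ∀ i ∈ s, ((x i ^ p * a i) ^ (1 / (1 + p))) ^ (1 + p) = x i ^ p * a i := fun i hi => by
    rw [← rpow_mul (hxa i hi), one_div_mul_cancel (by positivity), rpow_one]
  have hg : ∀ i ∈ s, ((b i / x i) ^ (p / (1 + p))) ^ ((1 + p) / p) = b i / x i := fun i hi => by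
    rw [← rpow_mul (hbx i hi), div_mul_div_comm, mul_comm p, div_self (by positivity), rpow_one]
  rwa [sum_congr rfl hf, sum_congr rfl hg, one_div_div] at holder

theorem rpow_sum_rpow_mul_rpow_le_weightCost (hp : 0 < p) (ha : ∀ i ∈ s, 0 ≤ a i)
    (hb : ∀ i ∈ s, 0 ≤ b i) (hx : ∀ i ∈ s, 0 < x i) :
    (∑ i ∈ s, a i ^ (1 / (1 + p)) * b i ^ (p / (1 + p))) ^ ((1 + p) / p) ≤
      weightCost s p a b x := by
  have hA : 0 ≤ ∑ i ∈ s, x i ^ p * a i :=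
    sum_nonneg fun i hi => mul_nonneg (rpow_nonneg (hx i hi).le _) (ha i hi)
  have hB : 0 ≤ ∑ i ∈ s, b i / x i := sum_nonneg fun i hi => div_nonneg (hb i hi) (hx i hi).le
  calc _ ≤ ((∑ i ∈ s, x i ^ p * a i) ^ (1 / (1 + p)) *
          (∑ i ∈ s, b i / x i) ^ (p / (1 + p))) ^ ((1 + p) / p) :=
        rpow_le_rpow
          (sum_nonneg fun i hi => mul_nonneg (rpow_nonneg (ha i hi) _) (rpow_nonneg (hb i hi) _))
          (sum_rpow_mul_rpow_le s hp ha hb hx) (by positivity)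
    _ = weightCost s p a b x := by
        rw [weightCost, mul_rpow (rpow_nonneg hA _) (rpow_nonneg hB _), ← rpow_mul hA,
          ← rpow_mul hB, div_mul_div_cancel₀ (by positivity), div_mul_div_comm, mul_comm p,
          div_self (by positivity), rpow_one]

theorem weightCost_eq_of_balanced (hp : 0 < p) (ha : ∀ i ∈ s, 0 ≤ a i) (hb : ∀ i ∈ s, 0 ≤ b i)
    (hx : ∀ i ∈ s, 0 < x i) (hbal : ∀ i ∈ s, x i ^ p * a i = b i / x i) :
    weightCost s p a b x =
      (∑ i ∈ s, a i ^ (1 / (1 + p)) * b i ^ (p / (1 + p))) ^ ((1 + p) / p) := by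
  have hterm : ∀ i ∈ s, a i ^ (1 / (1 + p)) * b i ^ (p / (1 + p)) = b i / x i := fun i hi => by
    have hy : 0 ≤ b i / x i := div_nonneg (hb i hi) (hx i hi).le
    have hexp : 1 / (1 + p) + p / (1 + p) = 1 := by field_simp
    rw [← rpow_mul_mul_div_rpow_eq (hx i hi) (ha i hi) (hb i hi), hbal i hi,
      ← rpow_add' hy (by rw [hexp]; exact one_ne_zero), hexp, rpow_one]
  rw [weightCost, sum_congr rfl hbal, sum_congr rfl hterm,
    ← rpow_add_one' (sum_nonneg fun i hi => div_nonneg (hb i hi) (hx i hi).le) (by positivity)]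
  congr 1
  field_simp

theorem weightCost_le_of_balanced {y : ι → ℝ} (hp : 0 < p) (ha : ∀ i ∈ s, 0 ≤ a i)
    (hb : ∀ i ∈ s, 0 ≤ b i) (hx : ∀ i ∈ s, 0 < x i) (hbal : ∀ i ∈ s, x i ^ p * a i = b i / x i)
    (hy : ∀ i ∈ s, 0 < y i) : weightCost s p a b x ≤ weightCost s p a b y :=
  weightCost_eq_of_balanced s hp ha hb hx hbal ▸ rpow_sum_rpow_mul_rpow_le_weightCost s hp ha hb hy

end

theorem cbc_weight_optimization_general (s : ℕ)
    (w c : Finset (Fin s) → ℝ)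
    (hw : ∀ u : Finset (Fin s), u ≠ ∅ → 0 < w u)
    (hc : ∀ u : Finset (Fin s), u ≠ ∅ → 0 < c u)
    (lam : ℝ) (hlam0 : 0 < lam)
    (γstar : Finset (Fin s) → ℝ)
    (hγstar : ∀ u : Finset (Fin s),
      γstar u = (c u / Real.sqrt (w u)) ^ ((2 : ℝ) / (1 + lam))) :
    ∀ γ : Finset (Fin s) → ℝ, (∀ u : Finset (Fin s), u ≠ ∅ → 0 < γ u) →
      (∑ u ∈ Finset.univ.filter (fun u : Finset (Fin s) => u ≠ ∅),
          γstar u ^ lam * w u) ^ (1 / lam) *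
        (∑ u ∈ Finset.univ.filter (fun u : Finset (Fin s) => u ≠ ∅),
          c u ^ 2 / γstar u)
      ≤ (∑ u ∈ Finset.univ.filter (fun u : Finset (Fin s) => u ≠ ∅),
          γ u ^ lam * w u) ^ (1 / lam) *
        (∑ u ∈ Finset.univ.filter (fun u : Finset (Fin s) => u ≠ ∅),
          c u ^ 2 / γ u) := by
  intro γ hγ
  have hne : ∀ u ∈ univ.filter (fun u : Finset (Fin s) => u ≠ ∅), u ≠ ∅ := fun u hu =>
    (mem_filter.1 hu).2
  have hγstar_pos : ∀ u, u ≠ ∅ → 0 < γstar u := fun u hu =>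
    hγstar u ▸ rpow_pos_of_pos (div_pos (hc u hu) (sqrt_pos.2 (hw u hu))) _
  have hbal : ∀ u, u ≠ ∅ → γstar u ^ lam * w u = c u ^ 2 / γstar u := fun u hu => by
    refine rpow_mul_eq_div_of_rpow_one_add_eq (hγstar_pos u hu) (hw u hu).ne' ?_
    rw [hγstar u, ← rpow_mul (div_pos (hc u hu) (sqrt_pos.2 (hw u hu))).le,
      div_mul_cancel₀ _ (by positivity), rpow_two, div_pow, sq_sqrt (hw u hu).le]
  exact weightCost_le_of_balanced _ hlam0 (fun u hu => (hw u (hne u hu)).le)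
    (fun u _ => sq_nonneg (c u)) (fun u hu => hγstar_pos u (hne u hu))
    (fun u hu => hbal u (hne u hu)) (fun u hu => hγ u (hne u hu))

/-- Weight-optimization lemma: for positive `w_u`, `c_u` indexed by the nonempty
subsets `u ⊆ {1,…,s}` and `λ ∈ (0,1]`, the quantity
`C(γ) = (∑_u γ_u^λ w_u)^{1/λ} · (∑_u c_u²/γ_u)` over positive weights `γ` is
minimized by `γ_u = (c_u/√(w_u))^{2/(1+λ)}`. -/
theorem cbc_weight_optimization (s : ℕ)
    (w c : Finset (Fin s) → ℝ)
    (hw : ∀ u : Finset (Fin s), u ≠ ∅ → 0 < w u)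
    (hc : ∀ u : Finset (Fin s), u ≠ ∅ → 0 < c u)
    (lam : ℝ) (hlam0 : 0 < lam) (hlam1 : lam ≤ 1)
    (γstar : Finset (Fin s) → ℝ)
    (hγstar : ∀ u : Finset (Fin s),
      γstar u = (c u / Real.sqrt (w u)) ^ ((2 : ℝ) / (1 + lam))) :
    ∀ γ : Finset (Fin s) → ℝ, (∀ u : Finset (Fin s), u ≠ ∅ → 0 < γ u) →
      (∑ u ∈ Finset.univ.filter (fun u : Finset (Fin s) => u ≠ ∅),
          γstar u ^ lam * w u) ^ (1 / lam) *
        (∑ u ∈ Finset.univ.filter (fun u : Finset (Fin s) => u ≠ ∅),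
          c u ^ 2 / γstar u)
      ≤ (∑ u ∈ Finset.univ.filter (fun u : Finset (Fin s) => u ≠ ∅),
          γ u ^ lam * w u) ^ (1 / lam) *
        (∑ u ∈ Finset.univ.filter (fun u : Finset (Fin s) => u ≠ ∅),
          c u ^ 2 / γ u) :=
  cbc_weight_optimization_general s w c hw hc lam hlam0 γstar hγstar
end

section
/- For any integer n ≥ 0, ∑_{i=0}^{n} C(n,i) · 2^i · (i+5)!/120 ≤ e · 2^n · (n+5)!/120. -/
/-!
Since `C(n,i) (i+5)! (n-i)! ≤ (n+5)!`, the `i`-th term is at most `(n+5)!/120 · 2^i/(n-i)!`.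
Reindexing by `j = n - i` turns `∑ 2^i/(n-i)!` into `2^n ∑ (1/2)^j/j!`, a partial sum of `e^{1/2} ≤ e`.
-/

open Finset

/-- `(i+k)!/i! = k! C(i+k,k)` is monotone in `i`. -/
theorem Nat.choose_mul_factorial_add_mul_factorial_sub_le {n i : ℕ} (k : ℕ) (h : i ≤ n) :
    n.choose i * (i + k).factorial * (n - i).factorial ≤ (n + k).factorial := by
  calc n.choose i * (i + k).factorial * (n - i).factorial
      = (i + k).choose k * k.factorial * (n.choose i * i.factorial * (n - i).factorial) := by
        rw [← Nat.add_choose_mul_factorial_mul_factorial i k]; ring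
    _ = (i + k).choose k * n.factorial * k.factorial := by
        rw [Nat.choose_mul_factorial_mul_factorial h]; ring
    _ ≤ (n + k).choose k * n.factorial * k.factorial := by gcongr
    _ = (n + k).factorial := Nat.add_choose_mul_factorial_mul_factorial n k

theorem sum_choose_mul_pow_mul_factorial_add_le {x : ℝ} (hx : 0 ≤ x) (n k : ℕ) :
    ∑ i ∈ range (n + 1), (n.choose i : ℝ) * x ^ i * (i + k).factorial
      ≤ (n + k).factorial * ∑ i ∈ range (n + 1), x ^ i / (n - i).factorial := by
  rw [mul_sum]
  refine sum_le_sum fun i hi => ?_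
  have hin : i ≤ n := Nat.lt_succ_iff.mp (mem_range.mp hi)
  have hfact : (n.choose i : ℝ) * (i + k).factorial * (n - i).factorial ≤ (n + k).factorial := by
    exact_mod_cast Nat.choose_mul_factorial_add_mul_factorial_sub_le k hin
  have hpos : (0 : ℝ) < (n - i).factorial := by positivity
  rw [mul_div_assoc', le_div_iff₀ hpos]
  calc (n.choose i : ℝ) * x ^ i * (i + k).factorial * (n - i).factorial
      = (n.choose i : ℝ) * (i + k).factorial * (n - i).factorial * x ^ i := by ring
    _ ≤ (n + k).factorial * x ^ i := by gcongr

theorem sum_pow_div_factorial_sub_le {x : ℝ} (hx : 0 < x) (n : ℕ) :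
    ∑ i ∈ range (n + 1), x ^ i / (n - i).factorial ≤ x ^ n * Real.exp x⁻¹ := by
  have hreflect : ∑ i ∈ range (n + 1), x ^ i / (n - i).factorial
      = x ^ n * ∑ j ∈ range (n + 1), x⁻¹ ^ j / j.factorial := by
    rw [← sum_range_reflect, mul_sum]
    refine sum_congr rfl fun j hj => ?_
    have hjn : j ≤ n := Nat.lt_succ_iff.mp (mem_range.mp hj)
    rw [Nat.add_sub_cancel, Nat.sub_sub_self hjn, pow_sub₀ x hx.ne' hjn]
    ring
  rw [hreflect]
  gcongr
  exact Real.sum_le_exp_of_nonneg (by positivity) (n + 1)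

/-- For any integer `n ≥ 0`, `∑_{i=0}^{n} C(n,i) 2^i (i+5)!/120 ≤ e · 2^n (n+5)!/120`. -/
theorem sum_choose_shifted_factorial_le (n : ℕ) :
    (∑ i ∈ Finset.range (n + 1),
        (n.choose i : ℝ) * 2 ^ i * (Nat.factorial (i + 5) : ℝ) / 120)
      ≤ Real.exp 1 * 2 ^ n * (Nat.factorial (n + 5) : ℝ) / 120 := by
  have hexp : Real.exp 2⁻¹ ≤ Real.exp 1 := Real.exp_le_exp.mpr (by norm_num)
  rw [← sum_div]
  gcongr
  calc ∑ i ∈ range (n + 1), (n.choose i : ℝ) * 2 ^ i * (i + 5).factorial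
      ≤ (n + 5).factorial * ∑ i ∈ range (n + 1), (2 : ℝ) ^ i / (n - i).factorial :=
        sum_choose_mul_pow_mul_factorial_add_le zero_le_two n 5
    _ ≤ (n + 5).factorial * (2 ^ n * Real.exp 2⁻¹) := by
        gcongr; exact sum_pow_div_factorial_sub_le two_pos n
    _ ≤ Real.exp 1 * 2 ^ n * (n + 5).factorial := by
        rw [mul_comm (Real.exp 1), mul_comm _ (_ * _)]
        gcongr
end
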